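/- arXiv:1711.08815 — 2 statements merged into one kernel-verified Lean document; each statement's English description precedes it below -/
import Mathlib

section
/- In the randomly oriented complete binary tree T_n of height n with parameter p ∈ [0,1], the probability that the root r gets wet equals ρ_n(p), in both percolation models: P(X_r) = P(Y_r) = ρ_n(p), where ρ_0 = 1 and ρ_{k+1} = 2p·ρ_k − (p·ρ_k)². -/
open MeasureTheory ProbabilityTheory Finset
open scoped Classical

/-- Vertices of the complete binary tree of height `n`: words over `{0,1}`
of length at most `n`.  The empty word is the root; words of length `n`
are the leaves; the level of `v` is `n - |v|`. -/
def Vtx (n : ℕ) : Type := {l : List Bool // l.length ≤ n}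

/-- Edges of the complete binary tree of height `n`, indexed by the nonempty
words of length at most `n`: the edge joins such a word to its predecessor
(the word obtained by deleting the last letter). -/
def Edg (n : ℕ) : Type := {l : List Bool // l ≠ [] ∧ l.length ≤ n}

noncomputable instance (n : ℕ) : Fintype (Vtx n) := by
  apply Fintype.ofInjective (fun v : Vtx n => fun i : Fin (n + 1) => v.1[i.1]?)
  intro u v h
  apply Subtype.ext
  apply List.ext_getElem?
  intro m
  by_cases hm : m < n + 1
  · exact congrFun h ⟨m, hm⟩
  · have hu := u.2
    have hv := v.2
    rw [List.getElem?_eq_none_iff.2, List.getElem?_eq_none_iff.2] <;> omega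

noncomputable instance (n : ℕ) : Fintype (Edg n) := by
  apply Fintype.ofInjective (fun v : Edg n => fun i : Fin (n + 1) => v.1[i.1]?)
  intro u v h
  apply Subtype.ext
  apply List.ext_getElem?
  intro m
  by_cases hm : m < n + 1
  · exact congrFun h ⟨m, hm⟩
  · have hu := u.2.2
    have hv := v.2.2
    rw [List.getElem?_eq_none_iff.2, List.getElem?_eq_none_iff.2] <;> omega

/-- The Bernoulli measure on `Bool`: `true` has probability `p`,
`false` has probability `1 - p`. -/
noncomputable def bern (p : ℝ) : Measure Bool :=
  (ENNReal.ofReal p) • Measure.dirac true + (ENNReal.ofReal (1 - p)) • Measure.dirac false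

instance (p : ℝ) : IsFiniteMeasure (bern p) := by
  constructor
  simp only [bern, Measure.add_apply, Measure.smul_apply, smul_eq_mul]
  exact ENNReal.add_lt_top.mpr
    ⟨ENNReal.mul_lt_top ENNReal.ofReal_lt_top (by simp),
     ENNReal.mul_lt_top ENNReal.ofReal_lt_top (by simp)⟩

/-- The random orientation measure on the complete binary tree of height `n`:
each edge is oriented towards the root (coordinate `true`) with probability `p`,
independently of the other edges. -/
noncomputable def treeMeasure (n : ℕ) (p : ℝ) : Measure (Edg n → Bool) :=
  Measure.pi fun _ => bern p

/-- One oriented step in the configuration `ω`: `a → b` if the tree edge between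
`a` and `b` is oriented from `a` to `b` (coordinate `true` means oriented towards
the root, i.e. towards the shorter word). -/
def TStep {n : ℕ} (ω : Edg n → Bool) (a b : Vtx n) : Prop :=
  ∃ e : Edg n, (ω e = true ∧ e.1 = a.1 ∧ b.1 = e.1.dropLast) ∨
    (ω e = false ∧ e.1 = b.1 ∧ a.1 = e.1.dropLast)

/-- `X v`: the event that water, pumped into the leaves, reaches `v`, i.e. there is
a directed path from some leaf to `v`. -/
def Xwet {n : ℕ} (v : Vtx n) : Set (Edg n → Bool) :=
  {ω | ∃ w : Vtx n, w.1.length = n ∧ Relation.ReflTransGen (TStep ω) w v}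

/-- `Y v`: the event that `v` gets wet in downwards percolation: there is a leaf `w`
above `v` such that every edge on the path from `w` down to `v` is oriented
towards the root. -/
def Ydown {n : ℕ} (v : Vtx n) : Set (Edg n → Bool) :=
  {ω | ∃ w : List Bool, w.length = n ∧ v.1 <+: w ∧
    ∀ u : Edg n, u.1 <+: w → v.1.length < u.1.length → ω u = true}

/-- The recursion `ρ₀ = 1`, `ρ_{k+1} = 2 p ρ_k - (p ρ_k)²`. -/
noncomputable def rho (p : ℝ) : ℕ → ℝ
  | 0 => 1
  | k + 1 => 2 * p * rho p k - (p * rho p k) ^ 2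

/-- `α^{(n)}_k`, the probability that water reaches a level-`k` vertex from below. -/
noncomputable def alpha (p : ℝ) (n k : ℕ) : ℝ :=
  (1 - p) * p * ∑ i ∈ Finset.range (n - k),
    (1 - p) ^ i * rho p (k + i) * ∏ j ∈ Finset.range i, (1 - p * rho p (k + j))

/-- The size of the percolation cluster `C_n` (leaves excluded). -/
noncomputable def clusterSize (n : ℕ) (ω : Edg n → Bool) : ℕ :=
  Nat.card {v : Vtx n // v.1.length < n ∧ ω ∈ Xwet v}

/-- The size of the downwards percolation cluster `C↓_n` (leaves excluded). -/
noncomputable def downClusterSize (n : ℕ) (ω : Edg n → Bool) : ℕ :=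
  Nat.card {v : Vtx n // v.1.length < n ∧ ω ∈ Ydown v}

/-- The maximum level reached by water in downwards percolation. -/
noncomputable def maxLevel (n : ℕ) (ω : Edg n → Bool) : ℕ :=
  sSup ({0} ∪ {k | ∃ v : Vtx n, ω ∈ Ydown v ∧ n - v.1.length = k})

/-- The root of the tree. -/
def root (n : ℕ) : Vtx n := ⟨[], by simp⟩

/-! ### Auxiliary material for `prob_root_wet` -/

section PW

/-- Every subset of a countable measurable-singleton space is measurable. -/
lemma pw_measurableSet {α : Type*} [MeasurableSpace α] [Countable α]
    [MeasurableSingletonClass α] (s : Set α) : MeasurableSet s :=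
  s.to_countable.measurableSet

lemma bern_true {p : ℝ} : bern p {true} = ENNReal.ofReal p := by
  simp [bern, Measure.dirac_apply' _ (by trivial : MeasurableSet ({true} : Set Bool))]

lemma bern_prob {p : ℝ} (hp0 : 0 ≤ p) (hp1 : p ≤ 1) : IsProbabilityMeasure (bern p) := by
  constructor
  simp only [bern, Measure.add_apply, Measure.smul_apply, smul_eq_mul,
    MeasureTheory.measure_univ, mul_one]
  rw [← ENNReal.ofReal_add hp0 (by linarith)]
  norm_num

/-- If a directed walk from `a` reaches the root, then every edge below `a` on the
path to the root points towards the root. -/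
lemma pw_all_true {n : ℕ} (ω : Edg n → Bool) (a : Vtx n)
    (h : Relation.ReflTransGen (TStep ω) a (root n)) :
    ∀ u : Edg n, u.1 <+: a.1 → ω u = true := by
  induction h using Relation.ReflTransGen.head_induction_on with
  | refl =>
    intro u hu
    exact absurd (List.prefix_nil.mp hu) u.2.1
  | head hstep _ ih =>
    rename_i a c _
    intro u hu
    obtain ⟨e, he⟩ := hstep
    rcases he with ⟨het, hea, hcd⟩ | ⟨_, hec, had⟩
    · by_cases hua : u.1 = a.1
      · have : u = e := Subtype.ext (hua.trans hea.symm)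
        rw [this]; exact het
      · apply ih
        rw [hcd]
        obtain ⟨s, hs⟩ := hu
        rcases s with _ | ⟨b, s'⟩
        · exact absurd (by simpa using hs) hua
        · refine ⟨(b :: s').dropLast, ?_⟩
          rw [← List.dropLast_append_of_ne_nil (l' := u.1) (by simp : (b :: s') ≠ []), hs, hea]
    · apply ih
      calc u.1 <+: a.1 := hu
        _ = c.1.dropLast := by rw [had, hec]
        _ <+: c.1 := List.dropLast_prefix _

/-- Climbing an all-true path. -/
lemma pw_climb {n : ℕ} (ω : Edg n → Bool) (w : List Bool) (hw : w.length ≤ n)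
    (hall : ∀ u : Edg n, u.1 <+: w → ω u = true) :
    ∀ l : List Bool, l <+: w → ∀ h : l.length ≤ n,
      Relation.ReflTransGen (TStep ω) ⟨l, h⟩ (root n) := by
  intro l
  induction l using List.reverseRecOn with
  | nil =>
    intro _ h
    exact Relation.ReflTransGen.refl
  | append_singleton l' b ih =>
    intro hp h
    have hp' : l' <+: w := (List.prefix_append l' ([b])).trans hp
    have hl' : l'.length ≤ n := le_trans (by simp) h
    have step : TStep ω ⟨l' ++ [b], h⟩ ⟨l', hl'⟩ := by
      refine ⟨⟨l' ++ [b], by simp, h⟩, Or.inl ⟨hall _ hp, rfl, ?_⟩⟩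
      simp
    exact Relation.ReflTransGen.head step (ih hp' hl')

/-- For the root, the two percolation events coincide. -/
lemma pw_X_eq_Y (n : ℕ) : Xwet (root n) = Ydown (root n) := by
  ext ω
  constructor
  · rintro ⟨w, hwlen, hpath⟩
    exact ⟨w.1, hwlen, List.nil_prefix, fun u hu _ => pw_all_true ω w hpath u hu⟩
  · rintro ⟨w, hwlen, -, hall⟩
    refine ⟨⟨w, le_of_eq hwlen⟩, hwlen, ?_⟩
    have hall' : ∀ u : Edg n, u.1 <+: w → ω u = true := by
      intro u hu
      refine hall u hu ?_
      exact List.length_pos_iff.mpr u.2.1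
    exact pw_climb ω w (le_of_eq hwlen) hall' w List.prefix_rfl (le_of_eq hwlen)

/-- One of the two subtrees of the root, together with the edge joining it to the root. -/
def pwSide (n : ℕ) (b : Bool) : Unit ⊕ Edg n → Edg (n + 1)
  | .inl _ => ⟨[b], by simp, by simpa using Nat.succ_le_succ (Nat.zero_le n)⟩
  | .inr e => ⟨b :: e.1, by simp, by simpa using Nat.succ_le_succ e.2.2⟩

/-- Splitting the edges of `T_{n+1}` into the two subtrees. -/
def pwSplit (n : ℕ) : Edg (n + 1) → (Unit ⊕ Edg n) ⊕ (Unit ⊕ Edg n) := fun e =>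
  match e with
  | ⟨[], h⟩ => absurd rfl h.1
  | ⟨b :: t, h⟩ =>
    (bif b then Sum.inr else Sum.inl)
      (if ht : t = [] then .inl () else
        .inr ⟨t, ht, by have := h.2; simp only [List.length_cons] at this; omega⟩)

/-- The edge set of `T_{n+1}` is two copies of (edge set of `T_n` plus one edge). -/
def pwEquiv (n : ℕ) : ((Unit ⊕ Edg n) ⊕ (Unit ⊕ Edg n)) ≃ Edg (n + 1) where
  toFun := Sum.elim (pwSide n false) (pwSide n true)
  invFun := pwSplit n
  left_inv := by
    rintro ((u | e) | (u | e))
    · rfl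
    · simp only [Sum.elim_inl, pwSide, pwSplit, cond_false]
      rw [dif_neg e.2.1]
      rfl
    · rfl
    · simp only [Sum.elim_inr, pwSide, pwSplit, cond_true]
      rw [dif_neg e.2.1]
      rfl
  right_inv := by
    rintro ⟨l, h⟩
    match l, h with
    | [], h => exact absurd rfl h.1
    | b :: t, h =>
      cases b <;> by_cases ht : t = [] <;>
        simp [pwSplit, pwSide, ht] <;> exact Subtype.ext (by simp [ht])

lemma pw_ydown_succ (n : ℕ) (ω : Edg (n + 1) → Bool) :
    ω ∈ Ydown (root (n + 1)) ↔
      ∃ b : Bool, ω (pwSide n b (.inl ())) = true ∧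
        (fun e : Edg n => ω (pwSide n b (.inr e))) ∈ Ydown (root n) := by
  constructor
  · rintro ⟨w, hwl, -, hall⟩
    match w, hwl with
    | b :: w', hwl =>
      refine ⟨b, ?_, w', by simpa using hwl, List.nil_prefix, ?_⟩
      · exact hall (pwSide n b (.inl ())) ⟨w', rfl⟩ (by simp [pwSide, root])
      · intro u hu _
        refine hall (pwSide n b (.inr u)) ?_ (by simp [pwSide, root])
        obtain ⟨s, hs⟩ := hu
        exact ⟨s, by simp [pwSide, hs]⟩
  · rintro ⟨b, h1, w', hw'len, -, hall'⟩
    refine ⟨b :: w', by simp [hw'len], List.nil_prefix, ?_⟩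
    intro u hu hlen
    match u, hu with
    | ⟨[], hn⟩, hu => exact absurd rfl hn.1
    | ⟨c :: t, hn⟩, hu =>
      obtain ⟨hcb, ht⟩ := List.cons_prefix_cons.mp hu
      subst hcb
      by_cases ht0 : t = []
      · subst ht0
        have : (⟨c :: [], hn⟩ : Edg (n + 1)) = pwSide n c (.inl ()) :=
          Subtype.ext (by simp [pwSide])
        rw [this]; exact h1
      · have htlen : t.length ≤ n := by
          have := hn.2; simp only [List.length_cons] at this; omega
        have : (⟨c :: t, hn⟩ : Edg (n + 1)) = pwSide n c (.inr ⟨t, ht0, htlen⟩) :=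
          Subtype.ext (by simp [pwSide])
        rw [this]
        exact hall' ⟨t, ht0, htlen⟩ ht (List.length_pos_iff.mpr ht0)

lemma pw_rho_mem {p : ℝ} (hp0 : 0 ≤ p) (hp1 : p ≤ 1) :
    ∀ n, 0 ≤ rho p n ∧ rho p n ≤ 1 := by
  intro n
  induction n with
  | zero => simp [rho]
  | succ n ih =>
    obtain ⟨h0, h1⟩ := ih
    have ht0 : 0 ≤ p * rho p n := mul_nonneg hp0 h0
    have ht1 : p * rho p n ≤ 1 := by nlinarith
    constructor
    · simp only [rho]; nlinarith
    · simp only [rho]; nlinarith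

end PW

section PWKey

open MeasureTheory

lemma pw_key {p : ℝ} (hp0 : 0 ≤ p) (hp1 : p ≤ 1) (n : ℕ) :
    treeMeasure n p (Ydown (root n)) = ENNReal.ofReal (rho p n) := by
  haveI := bern_prob hp0 hp1
  induction n with
  | zero =>
    have h1 : Ydown (root 0) = Set.univ := by
      ext ω
      simp only [Ydown, Set.mem_setOf_eq, Set.mem_univ, iff_true]
      exact ⟨[], rfl, List.prefix_rfl, fun u _ _ =>
        absurd (List.length_eq_zero_iff.mp (Nat.le_zero.mp u.2.2)) u.2.1⟩
    haveI : IsProbabilityMeasure (treeMeasure 0 p) := by unfold treeMeasure; infer_instance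
    rw [h1, measure_univ]
    simp [rho]
  | succ n ih =>
    haveI hFE : Finite (Edg n) := Finite.of_fintype _
    haveI hFE1 : Finite (Edg (n + 1)) := Finite.of_fintype _
    haveI : Countable (Unit ⊕ Edg n) := by infer_instance
    set J := Unit ⊕ Edg n with hJ
    set μJ : Measure (J → Bool) := Measure.pi (fun _ => bern p) with hμJ
    haveI : IsProbabilityMeasure μJ := by rw [hμJ]; infer_instance
    set A : Set (J → Bool) :=
      {x | x (.inl ()) = true ∧ (fun e : Edg n => x (.inr e)) ∈ Ydown (root n)} with hA
    -- value of `μJ A`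
    have hAval : μJ A = ENNReal.ofReal (p * rho p n) := by
      have hApre : A = (MeasurableEquiv.sumPiEquivProdPi (fun _ : J => Bool)) ⁻¹'
          ({y : Unit → Bool | y () = true} ×ˢ Ydown (root n)) := rfl
      rw [hApre,
        (MeasureTheory.measurePreserving_sumPiEquivProdPi
          (fun _ : J => bern p)).measure_preimage_equiv,
        Measure.prod_prod]
      have hB : {y : Unit → Bool | y () = true}
          = Set.univ.pi (fun _ : Unit => ({true} : Set Bool)) := by
        ext y
        simp only [Set.mem_setOf_eq, Set.mem_pi, Set.mem_univ, Set.mem_singleton_iff,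
          forall_const, true_implies]
        exact ⟨fun h i => h, fun h => h ()⟩
      rw [hB, Measure.pi_pi]
      have hprodU : (∏ _i : Unit, bern p {true}) = bern p {true} := by simp
      rw [hprodU, bern_true]
      have htm : (Measure.pi fun _ : Edg n => bern p) = treeMeasure n p := rfl
      rw [htm, ih, ← ENNReal.ofReal_mul hp0]
    -- translating the event
    have hpre : (MeasurableEquiv.piCongrLeft (fun _ : Edg (n + 1) => Bool) (pwEquiv n)) ⁻¹'
          Ydown (root (n + 1))
        = (MeasurableEquiv.sumPiEquivProdPi (fun _ : J ⊕ J => Bool)) ⁻¹'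
          {q : (J → Bool) × (J → Bool) | q.1 ∈ A ∨ q.2 ∈ A} := by
      ext g
      simp only [Set.mem_preimage]
      rw [show ((MeasurableEquiv.piCongrLeft (fun _ : Edg (n + 1) => Bool) (pwEquiv n)) g
            ∈ Ydown (root (n + 1)))
          ↔ _ from pw_ydown_succ n _]
      have hfalse : ∀ j : J,
          (MeasurableEquiv.piCongrLeft (fun _ : Edg (n + 1) => Bool) (pwEquiv n)) g
            (pwSide n false j) = g (Sum.inl j) := fun j =>
        MeasurableEquiv.piCongrLeft_apply_apply (β := fun _ : Edg (n + 1) => Bool)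
          (pwEquiv n) g (Sum.inl j)
      have htrue : ∀ j : J,
          (MeasurableEquiv.piCongrLeft (fun _ : Edg (n + 1) => Bool) (pwEquiv n)) g
            (pwSide n true j) = g (Sum.inr j) := fun j =>
        MeasurableEquiv.piCongrLeft_apply_apply (β := fun _ : Edg (n + 1) => Bool)
          (pwEquiv n) g (Sum.inr j)
      simp only [hA, Set.mem_setOf_eq, MeasurableEquiv.coe_sumPiEquivProdPi,
        Equiv.sumPiEquivProdPi, Equiv.coe_fn_mk, Bool.exists_bool, hfalse, htrue]
    have hS2 : {q : (J → Bool) × (J → Bool) | q.1 ∈ A ∨ q.2 ∈ A}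
        = (A ×ˢ Set.univ) ∪ (Set.univ ×ˢ A) := by
      ext ⟨x, y⟩
      simp only [Set.mem_setOf_eq, Set.mem_union, Set.mem_prod, Set.mem_univ, and_true, true_and]
    -- main identity
    have hmain : treeMeasure (n + 1) p (Ydown (root (n + 1)))
        = (μJ.prod μJ) ((A ×ˢ Set.univ) ∪ (Set.univ ×ˢ A)) := by
      rw [← hS2]
      have h1 := (MeasureTheory.measurePreserving_piCongrLeft
        (fun _ : Edg (n + 1) => bern p) (pwEquiv n)).measure_preimage_equiv
        (Ydown (root (n + 1)))
      have h2 := (MeasureTheory.measurePreserving_sumPiEquivProdPi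
        (fun _ : J ⊕ J => bern p)).measure_preimage_equiv
        {q : (J → Bool) × (J → Bool) | q.1 ∈ A ∨ q.2 ∈ A}
      calc treeMeasure (n + 1) p (Ydown (root (n + 1)))
          = (Measure.pi fun _ : J ⊕ J => bern p)
            ((MeasurableEquiv.piCongrLeft (fun _ : Edg (n + 1) => Bool) (pwEquiv n)) ⁻¹'
              Ydown (root (n + 1))) := h1.symm
        _ = (Measure.pi fun _ : J ⊕ J => bern p)
            ((MeasurableEquiv.sumPiEquivProdPi (fun _ : J ⊕ J => Bool)) ⁻¹'
              {q : (J → Bool) × (J → Bool) | q.1 ∈ A ∨ q.2 ∈ A}) := by rw [hpre]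
        _ = (μJ.prod μJ) {q : (J → Bool) × (J → Bool) | q.1 ∈ A ∨ q.2 ∈ A} := h2
    -- inclusion-exclusion
    have hunion := MeasureTheory.measure_union_add_inter (μ := μJ.prod μJ)
      (A ×ˢ Set.univ) (pw_measurableSet (Set.univ ×ˢ A))
    rw [Set.prod_inter_prod, Set.inter_univ, Set.univ_inter,
      Measure.prod_prod, Measure.prod_prod, Measure.prod_prod,
      measure_univ, mul_one, one_mul, hAval] at hunion
    set t0 := p * rho p n with ht0def
    obtain ⟨hr0, hr1⟩ := pw_rho_mem hp0 hp1 n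
    have ht00 : 0 ≤ t0 := mul_nonneg hp0 hr0
    have ht01 : t0 ≤ 1 := by nlinarith
    have hrho : rho p (n + 1) = t0 + t0 - t0 * t0 := by
      show 2 * p * rho p n - (p * rho p n) ^ 2 = _
      rw [← ht0def]; ring
    rw [hmain, hrho]
    have hcongr : (μJ.prod μJ) ((A ×ˢ Set.univ) ∪ (Set.univ ×ˢ A))
          + ENNReal.ofReal (t0 * t0)
        = ENNReal.ofReal (t0 + t0 - t0 * t0) + ENNReal.ofReal (t0 * t0) := by
      rw [← ENNReal.ofReal_mul ht00] at hunion
      rw [hunion,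
        ← ENNReal.ofReal_add (show (0:ℝ) ≤ t0 + t0 - t0 * t0 by nlinarith)
          (show (0:ℝ) ≤ t0 * t0 by nlinarith),
        ← ENNReal.ofReal_add ht00 ht00]
      congr 1
      ring
    have hfin : ENNReal.ofReal (t0 * t0) ≠ ⊤ := ENNReal.ofReal_ne_top
    exact WithTop.add_right_cancel hfin hcongr

end PWKey

/-- **The probability that the root gets wet** equals `ρ_n`, in both percolation
models: `P(X_r) = P(Y_r) = ρ_n`. -/
theorem prob_root_wet (n : ℕ) (p : ℝ) (hp0 : 0 ≤ p) (hp1 : p ≤ 1) :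
    (treeMeasure n p (Xwet (root n))).toReal = rho p n ∧
    (treeMeasure n p (Ydown (root n))).toReal = rho p n := by
  obtain ⟨hr0, hr1⟩ := pw_rho_mem hp0 hp1 n
  have hY := pw_key hp0 hp1 n
  have hX : treeMeasure n p (Xwet (root n)) = ENNReal.ofReal (rho p n) := by
    rw [pw_X_eq_Y]; exact hY
  rw [hX, hY, ENNReal.toReal_ofReal hr0]
  exact ⟨rfl, rfl⟩
end

section
/- Let (p_n) be a sequence in (0,1) with p_n → 0, and consider the randomly oriented complete binary tree T_n of height n with parameter p_n. Then, as n → ∞, E[|C_n|]/(2^n·p_n) → 1 and E[|C↓_n|]/(2^n·p_n) → 1; in particular E[|C_n|] ∼ E[|C↓_n|] ∼ 2^n·p_n. -/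
open MeasureTheory ProbabilityTheory Finset
open scoped Classical

/-!
Both expectations are sums over the non-leaf vertices `v` of the probabilities of the events
`Y_v ⊆ X_v`. Each of the `2^(n-1)` vertices of level 1 lies in `C↓_n` as soon as one of its two
edges points to the root, which has probability `1 - (1 - p)^2 = p (2 - p)`; hence
`E|C↓_n| ≥ 2^n p (1 - p/2)`. Conversely, a directed path from a leaf `w` to `v` first moves
towards the root along edges oriented that way, down to a common prefix `u` of `w` and `v`.
A union bound over `u` and the `2^(n-|u|)` leaves above it gives
`P(X_v) ≤ ∑_{u ≤ v} (2p)^(n-|u|)`, and summing the geometric series gives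
`E|C_n| ≤ 2^n p / ((1 - p)(1 - 2p))`.
-/

open Filter Topology

section Probability

variable {p : ℝ}

lemma isProbabilityMeasure_bern (hp0 : 0 ≤ p) (hp1 : p ≤ 1) : IsProbabilityMeasure (bern p) :=
  ⟨by simp [bern, ← ENNReal.ofReal_add hp0 (sub_nonneg.2 hp1)]⟩

lemma bern_real_true (hp0 : 0 ≤ p) : (bern p).real {true} = p := by
  simp [bern, measureReal_def, hp0]

lemma bern_real_false (hp1 : p ≤ 1) : (bern p).real {false} = 1 - p := by
  simp [bern, measureReal_def, hp1]

instance (n : ℕ) (p : ℝ) : IsFiniteMeasure (treeMeasure n p) := by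
  unfold treeMeasure; infer_instance

lemma isProbabilityMeasure_treeMeasure (n : ℕ) (hp0 : 0 ≤ p) (hp1 : p ≤ 1) :
    IsProbabilityMeasure (treeMeasure n p) :=
  have := isProbabilityMeasure_bern hp0 hp1
  Measure.pi.instIsProbabilityMeasure _

lemma measureReal_pi_forall_eq {ι α : Type*} [Fintype ι] [MeasurableSpace α]
    (μ : Measure α) [IsProbabilityMeasure μ] (s : Finset ι) (a : α) :
    (Measure.pi fun _ : ι => μ).real {ω | ∀ i ∈ s, ω i = a} = μ.real {a} ^ s.card := by
  have : {ω : ι → α | ∀ i ∈ s, ω i = a} = (s : Set ι).pi fun _ => {a} := by ext; simp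
  simp [this, measureReal_def]

lemma measurableSet_of_edges {n : ℕ} (s : Set (Edg n → Bool)) : MeasurableSet s :=
  s.toFinite.measurableSet

lemma integral_natCard_eq_sum {Ω V : Type*} [MeasurableSpace Ω] [Fintype V]
    (μ : Measure Ω) [IsFiniteMeasure μ] (P : V → Prop) [DecidablePred P] (E : V → Set Ω)
    (hE : ∀ v, MeasurableSet (E v)) :
    ∫ ω, (Nat.card {v // P v ∧ ω ∈ E v} : ℝ) ∂μ = ∑ v ∈ univ.filter P, μ.real (E v) := by
  have hcard : ∀ ω, (Nat.card {v // P v ∧ ω ∈ E v} : ℝ)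
      = ∑ v ∈ univ.filter P, (E v).indicator 1 ω := by
    intro ω
    rw [Nat.card_eq_fintype_card, Fintype.card_subtype, ← filter_filter, card_filter]
    simp [Set.indicator_apply]
  simp_rw [hcard]
  rw [integral_finsetSum _ fun v _ => (integrable_const 1).indicator (hE v)]
  simp_rw [integral_indicator_one (hE _)]

end Probability

section Paths

variable {n : ℕ}

/-- Every edge on the path from `w` down to its prefix `u` carries the label `b`. -/
def SegmentConst (ω : Edg n → Bool) (b : Bool) (u w : List Bool) : Prop :=
  ∀ e : Edg n, e.1 <+: w → u.length < e.1.length → ω e = b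

variable {ω : Edg n → Bool} {b : Bool} {u w : List Bool}

lemma segmentConst_self : SegmentConst ω b u u :=
  fun _ he hlt => absurd he.length_le (by omega)

lemma SegmentConst.mono (h : SegmentConst ω b u w) {x : List Bool} (hx : x <+: w) :
    SegmentConst ω b u x :=
  fun e he => h e (he.trans hx)

lemma SegmentConst.dropLast_bottom (h : SegmentConst ω b u w) (huw : u <+: w)
    (hu : ∀ e : Edg n, e.1 = u → ω e = b) : SegmentConst ω b u.dropLast w := by
  intro e hew hlt
  rcases lt_or_ge u.length e.1.length with hue | hue
  · exact h e hew hue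
  · rw [List.length_dropLast] at hlt
    exact hu e ((List.prefix_of_prefix_length_le hew huw hue).eq_of_length (by omega))

lemma SegmentConst.snoc_top (h : SegmentConst ω b u w.dropLast)
    (hw : ∀ e : Edg n, e.1 = w → ω e = b) : SegmentConst ω b u w := by
  intro e hew hlt
  rcases eq_or_lt_of_le hew.length_le with hlen | hlen
  · exact hw e (hew.eq_of_length hlen)
  · exact h e (List.prefix_of_prefix_length_le hew w.dropLast_prefix (by simp; omega)) hlt

lemma exists_prefix_of_reflTransGen {a v : Vtx n} (h : Relation.ReflTransGen (TStep ω) a v) :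
    ∃ u : Vtx n, u.1 <+: a.1 ∧ u.1 <+: v.1 ∧
      SegmentConst ω true u.1 a.1 ∧ SegmentConst ω false u.1 v.1 := by
  induction h with
  | refl => exact ⟨a, List.prefix_refl _, List.prefix_refl _, segmentConst_self, segmentConst_self⟩
  | @tail x y _ hxy ih =>
    obtain ⟨u, hua, hux, hdown, hup⟩ := ih
    obtain ⟨e, ⟨hωe, hex, hy⟩ | ⟨hωe, hey, hx⟩⟩ := hxy
    · -- the step uses the edge of `x`, labelled `true`, while the edges between `u` and `x`
      -- are labelled `false`; hence `x = u`
      have hux' : u.1 = x.1 := by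
        refine hux.eq_of_length (le_antisymm hux.length_le (not_lt.1 fun hlt => ?_))
        simpa [hωe] using hup e (hex ▸ List.prefix_refl _) (hex ▸ hlt)
      have hedge : ∀ e' : Edg n, e'.1 = u.1 → ω e' = true := fun e' he' =>
        (Subtype.ext (he'.trans (hux'.trans hex.symm)) : e' = e) ▸ hωe
      refine ⟨y, ?_, List.prefix_refl _, ?_, segmentConst_self⟩
      · rw [hy, hex, ← hux']
        exact u.1.dropLast_prefix.trans hua
      · rw [hy, hex, ← hux']
        exact hdown.dropLast_bottom hua hedge
    · refine ⟨u, hua, hux.trans (hx ▸ hey ▸ y.1.dropLast_prefix), hdown, ?_⟩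
      refine SegmentConst.snoc_top (hey ▸ hx ▸ hup) fun e' he' => ?_
      rw [show e' = e from Subtype.ext (he'.trans hey.symm), hωe]

lemma reflTransGen_of_segmentConst_true {v x : Vtx n} (hvx : v.1 <+: x.1)
    (h : SegmentConst ω true v.1 x.1) : Relation.ReflTransGen (TStep ω) x v := by
  obtain ⟨k, hk⟩ : ∃ k, x.1.length = v.1.length + k :=
    ⟨_, (Nat.add_sub_cancel' hvx.length_le).symm⟩
  induction k generalizing x with
  | zero => rw [Subtype.ext (hvx.eq_of_length (by omega))]
  | succ k ih =>
    have hx : x.1 ≠ [] := fun hnil => by simp [hnil] at hk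
    have hxn : x.1.length ≤ n := x.2
    obtain ⟨y, hy⟩ : ∃ y : Vtx n, y.1 = x.1.dropLast := ⟨⟨x.1.dropLast, by simp; omega⟩, rfl⟩
    have hstep : TStep ω x y :=
      ⟨⟨x.1, hx, hxn⟩, Or.inl ⟨h _ (List.prefix_refl _) (show v.1.length < x.1.length by omega),
        rfl, hy⟩⟩
    have hvy : v.1 <+: y.1 :=
      hy ▸ List.prefix_of_prefix_length_le hvx x.1.dropLast_prefix (by simp; omega)
    exact .head hstep (ih hvy (hy ▸ h.mono x.1.dropLast_prefix) (by simp [hy]; omega))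

lemma Ydown_subset_Xwet (v : Vtx n) : Ydown v ⊆ Xwet v := by
  rintro ω ⟨w, hw, hvw, hseg⟩
  exact ⟨⟨w, hw.le⟩, hw, reflTransGen_of_segmentConst_true (x := ⟨w, hw.le⟩) hvw hseg⟩

end Paths

section Counting

variable {n : ℕ}

lemma card_vtx_length_eq {L : ℕ} (hL : L ≤ n) : #{v : Vtx n | v.1.length = L} = 2 ^ L := by
  let e : {v : Vtx n // v.1.length = L} ≃ List.Vector Bool L :=
    { toFun v := ⟨v.1.1, v.2⟩
      invFun x := ⟨⟨x.1, x.2.trans_le hL⟩, x.2⟩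
      left_inv _ := rfl
      right_inv _ := rfl }
  rw [← Fintype.card_subtype, Fintype.card_congr e, card_vector, Fintype.card_bool]

lemma card_leaves_above_le (u : List Bool) :
    #{w : Vtx n | w.1.length = n ∧ u <+: w.1} ≤ 2 ^ (n - u.length) := by
  let dropPrefix (w : Vtx n) : Vtx n := ⟨w.1.drop u.length, by have := w.2; simp; omega⟩
  calc #{w : Vtx n | w.1.length = n ∧ u <+: w.1}
      ≤ #{x : Vtx n | x.1.length = n - u.length} := by
        refine card_le_card_of_injOn dropPrefix (fun w hw => ?_) fun w hw w' hw' hww' => ?_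
        · simp only [coe_filter, mem_univ, true_and, Set.mem_ofPred_eq] at hw ⊢
          simp [dropPrefix, hw.1]
        · simp only [coe_filter, mem_univ, true_and, Set.mem_ofPred_eq] at hw hw'
          apply Subtype.ext
          rw [← List.take_append_drop u.length w.1, ← List.prefix_iff_eq_take.1 hw.2,
            ← List.take_append_drop u.length w'.1, ← List.prefix_iff_eq_take.1 hw'.2]
          exact congrArg (u ++ ·) (congrArg Subtype.val hww')
    _ = 2 ^ (n - u.length) := card_vtx_length_eq (Nat.sub_le _ _)

lemma le_card_segment_edges {w : List Bool} (hw : w.length = n) (m : ℕ) :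
    n - m ≤ #{e : Edg n | e.1 <+: w ∧ m < e.1.length} := by
  calc n - m = #(Ico (m + 1) (n + 1)) := by simp
    _ ≤ _ := card_le_card_of_surjOn (fun e : Edg n => e.1.length) fun j hj => by
      simp only [coe_Ico, Set.mem_Ico] at hj
      have hlen : (w.take j).length = j := by simp; omega
      refine ⟨⟨w.take j, List.ne_nil_of_length_pos (by omega), by omega⟩, ?_, hlen⟩
      simp only [coe_filter, mem_univ, true_and]
      exact ⟨List.take_prefix _ _, by rw [hlen]; omega⟩

lemma sum_prefixes_eq {M : Type*} [AddCommMonoid M] (v : Vtx n) (g : ℕ → M) :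
    ∑ u : Vtx n with u.1 <+: v.1, g u.1.length = ∑ j ∈ range (v.1.length + 1), g j := by
  have hvn : v.1.length ≤ n := v.2
  refine sum_nbij' (fun u => u.1.length) (fun j => ⟨v.1.take j, by simp; omega⟩)
    (fun u hu => ?_) (fun j _ => mem_filter.2 ⟨mem_univ _, List.take_prefix _ _⟩)
    (fun u hu => ?_) (fun j hj => ?_) fun _ _ => rfl
  · exact mem_range.2 (Nat.lt_succ_of_le (mem_filter.1 hu).2.length_le)
  · exact Subtype.ext (List.prefix_iff_eq_take.1 (mem_filter.1 hu).2).symm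
  · rw [mem_range] at hj
    show (v.1.take j).length = j
    simp; omega

lemma sum_nonleaf_eq {M : Type*} [AddCommMonoid M] (g : ℕ → M) :
    ∑ v : Vtx n with v.1.length < n, g v.1.length = ∑ L ∈ range n, 2 ^ L • g L := by
  rw [← sum_fiberwise_of_maps_to (g := fun v : Vtx n => v.1.length) (t := range n)
    fun v hv => by simpa using hv]
  refine sum_congr rfl fun L hL => ?_
  rw [mem_range] at hL
  rw [filter_filter, sum_congr rfl fun v hv => by rw [(mem_filter.1 hv).2.2], sum_const,
    ← card_vtx_length_eq hL.le]
  congr 3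
  ext v
  exact ⟨fun h => h.2, fun h => ⟨h ▸ hL, h⟩⟩

end Counting

section TreeProbabilities

variable {n : ℕ} {p : ℝ}

lemma measureReal_segmentConst_true_le (hp0 : 0 ≤ p) (hp1 : p ≤ 1) (u : List Bool)
    {w : List Bool} (hw : w.length = n) :
    (treeMeasure n p).real {ω | SegmentConst ω true u w} ≤ p ^ (n - u.length) := by
  have := isProbabilityMeasure_bern hp0 hp1
  have hset : {ω | SegmentConst ω true u w}
      = {ω | ∀ e ∈ ({e : Edg n | e.1 <+: w ∧ u.length < e.1.length} : Finset _), ω e = true} := by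
    ext ω; simp [SegmentConst]
  rw [hset, treeMeasure, measureReal_pi_forall_eq, bern_real_true hp0]
  exact pow_le_pow_of_le_one hp0 hp1 (le_card_segment_edges hw _)

lemma measureReal_Xwet_le (hp0 : 0 ≤ p) (hp1 : p ≤ 1) (v : Vtx n) :
    (treeMeasure n p).real (Xwet v) ≤ ∑ j ∈ range (v.1.length + 1), (2 * p) ^ (n - j) := by
  let leavesAbove (u : Vtx n) : Finset (Vtx n) := {w : Vtx n | w.1.length = n ∧ u.1 <+: w.1}
  have hcover : Xwet v ⊆ ⋃ u ∈ ({u : Vtx n | u.1 <+: v.1} : Finset _), ⋃ w ∈ leavesAbove u,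
      {ω | SegmentConst ω true u.1 w.1} := by
    rintro ω ⟨w, hw, hwv⟩
    obtain ⟨u, huw, huv, hdown, -⟩ := exists_prefix_of_reflTransGen hwv
    simp only [Set.mem_iUnion]
    exact ⟨u, by simpa using huv, w, by simpa [leavesAbove] using ⟨hw, huw⟩, hdown⟩
  calc (treeMeasure n p).real (Xwet v)
      ≤ ∑ u : Vtx n with u.1 <+: v.1, ∑ w ∈ leavesAbove u,
          (treeMeasure n p).real {ω | SegmentConst ω true u.1 w.1} :=
        (measureReal_mono hcover (measure_ne_top _ _)).trans <|
          (measureReal_biUnion_finset_le _ _).trans <|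
            sum_le_sum fun u _ => measureReal_biUnion_finset_le _ _
    _ ≤ ∑ u : Vtx n with u.1 <+: v.1, ∑ _w ∈ leavesAbove u, p ^ (n - u.1.length) := by
        gcongr with u _ w hw
        exact measureReal_segmentConst_true_le hp0 hp1 _ (mem_filter.1 hw).2.1
    _ ≤ ∑ u : Vtx n with u.1 <+: v.1, (2 * p) ^ (n - u.1.length) := by
        gcongr with u
        rw [sum_const, nsmul_eq_mul, mul_pow]
        gcongr
        exact_mod_cast card_leaves_above_le u.1
    _ = ∑ j ∈ range (v.1.length + 1), (2 * p) ^ (n - j) :=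
        sum_prefixes_eq v fun j => (2 * p) ^ (n - j)

lemma measureReal_Ydown_ge (hp0 : 0 ≤ p) (hp1 : p ≤ 1) (v : Vtx n) (hv : v.1.length + 1 = n) :
    p * (2 - p) ≤ (treeMeasure n p).real (Ydown v) := by
  have := isProbabilityMeasure_treeMeasure n hp0 hp1
  have := isProbabilityMeasure_bern hp0 hp1
  let child (b : Bool) : Edg n := ⟨v.1 ++ [b], by simp, by simp; omega⟩
  have hchild : ∀ b ω, ω (child b) = true → ω ∈ Ydown v := fun b ω h =>
    ⟨v.1 ++ [b], by simp; omega, List.prefix_append _ _, fun e he hlt =>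
      (Subtype.ext (he.eq_of_length (by have := he.length_le; simp at hlt this ⊢; omega)) :
        e = child b) ▸ h⟩
  have hcompl : (Ydown v)ᶜ ⊆ {ω | ∀ e ∈ ({child false, child true} : Finset _), ω e = false} := by
    intro ω hω
    simp only [mem_insert, mem_singleton, forall_eq_or_imp, forall_eq, Set.mem_ofPred_eq]
    exact ⟨by_contra fun h => hω (hchild _ ω (by simpa using h)),
      by_contra fun h => hω (hchild _ ω (by simpa using h))⟩
  have hcard : ({child false, child true} : Finset (Edg n)).card = 2 :=
    card_pair fun h => by simpa [child] using congrArg Subtype.val h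
  calc p * (2 - p) = 1 - (1 - p) ^ 2 := by ring
    _ ≤ 1 - (treeMeasure n p).real (Ydown v)ᶜ := by
        gcongr
        refine (measureReal_mono hcompl).trans_eq ?_
        rw [treeMeasure, measureReal_pi_forall_eq, bern_real_false hp1, hcard]
    _ = (treeMeasure n p).real (Ydown v) := by
        rw [probReal_compl_eq_one_sub (measurableSet_of_edges _), sub_sub_cancel]

end TreeProbabilities

section Expectations

variable {n : ℕ} {p : ℝ}

lemma integral_clusterSize :
    ∫ ω, (clusterSize n ω : ℝ) ∂(treeMeasure n p)
      = ∑ v : Vtx n with v.1.length < n, (treeMeasure n p).real (Xwet v) :=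
  integral_natCard_eq_sum _ (fun v : Vtx n => v.1.length < n) _ fun _ => measurableSet_of_edges _

lemma integral_downClusterSize :
    ∫ ω, (downClusterSize n ω : ℝ) ∂(treeMeasure n p)
      = ∑ v : Vtx n with v.1.length < n, (treeMeasure n p).real (Ydown v) :=
  integral_natCard_eq_sum _ (fun v : Vtx n => v.1.length < n) _ fun _ => measurableSet_of_edges _

lemma integral_downClusterSize_le_integral_clusterSize :
    ∫ ω, (downClusterSize n ω : ℝ) ∂(treeMeasure n p)
      ≤ ∫ ω, (clusterSize n ω : ℝ) ∂(treeMeasure n p) := by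
  rw [integral_clusterSize, integral_downClusterSize]
  exact sum_le_sum fun v _ => measureReal_mono (Ydown_subset_Xwet v)

lemma le_integral_downClusterSize (hp0 : 0 ≤ p) (hp1 : p ≤ 1) (hn : 1 ≤ n) :
    (1 - p / 2) * (2 ^ n * p) ≤ ∫ ω, (downClusterSize n ω : ℝ) ∂(treeMeasure n p) := by
  rw [integral_downClusterSize]
  calc (1 - p / 2) * (2 ^ n * p) = ∑ _v : Vtx n with _v.1.length = n - 1, p * (2 - p) := by
        rw [sum_const, card_vtx_length_eq (Nat.sub_le _ _), nsmul_eq_mul, Nat.cast_pow,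
          Nat.cast_ofNat, ← Nat.sub_add_cancel hn, pow_succ, Nat.add_sub_cancel]
        ring
    _ ≤ ∑ v : Vtx n with v.1.length = n - 1, (treeMeasure n p).real (Ydown v) :=
        sum_le_sum fun v hv => measureReal_Ydown_ge hp0 hp1 v (by simp at hv; omega)
    _ ≤ ∑ v : Vtx n with v.1.length < n, (treeMeasure n p).real (Ydown v) :=
        sum_le_sum_of_subset_of_nonneg (monotone_filter_right _ fun v hv => by omega)
          fun _ _ _ => measureReal_nonneg

lemma sum_range_pow_sub_le {q : ℝ} (hq0 : 0 ≤ q) (hq1 : q < 1) {m : ℕ} (hm : m ≤ n + 1) :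
    ∑ j ∈ range m, q ^ (n - j) ≤ q ^ (n + 1 - m) / (1 - q) := by
  rw [range_eq_Ico, sum_Ico_reflect _ _ hm]
  exact geom_sum_Ico_le_of_lt_one hq0 hq1

lemma integral_clusterSize_le (hp0 : 0 ≤ p) (hp : p < 1 / 2) :
    ∫ ω, (clusterSize n ω : ℝ) ∂(treeMeasure n p) ≤ ((1 - p) * (1 - 2 * p))⁻¹ * (2 ^ n * p) := by
  rw [integral_clusterSize]
  calc ∑ v : Vtx n with v.1.length < n, (treeMeasure n p).real (Xwet v)
      ≤ ∑ v : Vtx n with v.1.length < n, ∑ j ∈ range (v.1.length + 1), (2 * p) ^ (n - j) :=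
        sum_le_sum fun v _ => measureReal_Xwet_le hp0 (by linarith) v
    _ = ∑ L ∈ range n, 2 ^ L • ∑ j ∈ range (L + 1), (2 * p) ^ (n - j) :=
        sum_nonleaf_eq fun L => ∑ j ∈ range (L + 1), (2 * p) ^ (n - j)
    _ ≤ ∑ L ∈ range n, 2 ^ L • ((2 * p) ^ (n - L) / (1 - 2 * p)) := by
        gcongr with L hL
        simpa using sum_range_pow_sub_le (n := n) (m := L + 1) (by linarith) (by linarith)
          (by simp at hL; omega)
    _ = 2 ^ n / (1 - 2 * p) * ∑ L ∈ range n, p ^ (n - L) := by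
        rw [mul_sum]
        refine sum_congr rfl fun L hL => ?_
        have h2 : (2 : ℝ) ^ L * 2 ^ (n - L) = 2 ^ n := by
          rw [← pow_add, Nat.add_sub_cancel' (mem_range.1 hL).le]
        rw [nsmul_eq_mul, mul_pow, Nat.cast_pow, Nat.cast_ofNat, ← h2]
        ring
    _ ≤ 2 ^ n / (1 - 2 * p) * (p / (1 - p)) := by
        refine mul_le_mul_of_nonneg_left ?_ (div_nonneg (by positivity) (by linarith))
        simpa using sum_range_pow_sub_le hp0 (by linarith) (Nat.le_succ n)
    _ = ((1 - p) * (1 - 2 * p))⁻¹ * (2 ^ n * p) := by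
        field_simp

end Expectations

lemma tendsto_div_of_squeeze {α : Type*} {l : Filter α} {I D a b : α → ℝ}
    (ha : Tendsto a l (𝓝 1)) (hb : Tendsto b l (𝓝 1))
    (h : ∀ᶠ x in l, 0 < D x ∧ a x * D x ≤ I x ∧ I x ≤ b x * D x) :
    Tendsto (fun x => I x / D x) l (𝓝 1) :=
  tendsto_of_tendsto_of_tendsto_of_le_of_le' ha hb
    (h.mono fun _ hx => (le_div_iff₀ hx.1).2 hx.2.1)
    (h.mono fun _ hx => (div_le_iff₀ hx.1).2 hx.2.2)

theorem expected_cluster_asymptotics_general (pn : ℕ → ℝ)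
    (hp0 : ∀ n, 0 < pn n)
    (hlim : Filter.Tendsto pn Filter.atTop (nhds 0)) :
    Filter.Tendsto
      (fun n => (∫ ω, (clusterSize n ω : ℝ) ∂(treeMeasure n (pn n))) /
        (2 ^ n * pn n)) Filter.atTop (nhds 1) ∧
    Filter.Tendsto
      (fun n => (∫ ω, (downClusterSize n ω : ℝ) ∂(treeMeasure n (pn n))) /
        (2 ^ n * pn n)) Filter.atTop (nhds 1) := by
  have hlow : Tendsto (fun n => 1 - pn n / 2) atTop (𝓝 1) := by
    simpa using tendsto_const_nhds.sub (hlim.div_const 2)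
  have hup : Tendsto (fun n => ((1 - pn n) * (1 - 2 * pn n))⁻¹) atTop (𝓝 1) := by
    have hprod : Tendsto (fun n => (1 - pn n) * (1 - 2 * pn n)) atTop
        (𝓝 ((1 - 0) * (1 - 2 * 0))) :=
      (tendsto_const_nhds.sub hlim).mul (tendsto_const_nhds.sub (hlim.const_mul 2))
    simpa using hprod.inv₀ (by norm_num)
  have hsmall : ∀ᶠ n in atTop, 1 ≤ n ∧ pn n < 1 / 2 :=
    (eventually_ge_atTop 1).and (hlim.eventually (gt_mem_nhds (by norm_num)))
  have hpos (n : ℕ) : 0 < 2 ^ n * pn n := by have := hp0 n; positivity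
  refine ⟨tendsto_div_of_squeeze hlow hup ?_, tendsto_div_of_squeeze hlow hup ?_⟩ <;>
    filter_upwards [hsmall] with n ⟨hn, hp⟩
  · exact ⟨hpos n, (le_integral_downClusterSize (hp0 n).le (by linarith) hn).trans
      integral_downClusterSize_le_integral_clusterSize, integral_clusterSize_le (hp0 n).le hp⟩
  · exact ⟨hpos n, le_integral_downClusterSize (hp0 n).le (by linarith) hn,
      integral_downClusterSize_le_integral_clusterSize.trans
        (integral_clusterSize_le (hp0 n).le hp)⟩

/-- **Expected cluster sizes in the badly subcritical regime.**
If `p_n → 0` then `E[|C_n|] ∼ E[|C↓_n|] ∼ 2^n p_n`. -/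
theorem expected_cluster_asymptotics (pn : ℕ → ℝ)
    (hp0 : ∀ n, 0 < pn n) (hp1 : ∀ n, pn n < 1)
    (hlim : Filter.Tendsto pn Filter.atTop (nhds 0)) :
    Filter.Tendsto
      (fun n => (∫ ω, (clusterSize n ω : ℝ) ∂(treeMeasure n (pn n))) /
        (2 ^ n * pn n)) Filter.atTop (nhds 1) ∧
    Filter.Tendsto
      (fun n => (∫ ω, (downClusterSize n ω : ℝ) ∂(treeMeasure n (pn n))) /
        (2 ^ n * pn n)) Filter.atTop (nhds 1) :=
  expected_cluster_asymptotics_general pn hp0 hlim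
end
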